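/- arXiv:1708.00474 — 2 statements merged into one kernel-verified Lean document; each statement's English description precedes it below -/
import Mathlib

section
/- Spectral insertion identity: Let H be a self-adjoint operator on a finite-dimensional complex Hilbert space, let X and Y be operators on that space, and set τ_r(X) = e^{irH} X e^{−irH} and Z_K = P_K Z P_K where P_B = χ_B(H). Let K = [Θ₀, Θ₂] be a compact interval and f ∈ C_c^∞(ℝ) with supp f ⊂ [a_f, b_f]. Then ∫_ℝ ( e^{−irH} Y τ_r(X) )_K f̂(r) dr = ∫_ℝ ( e^{−irH} Y P_{K_f} τ_r(X) )_K f̂(r) dr, where K_f = [2Θ₀ − b_f, 2Θ₂ − a_f]. -/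
open MeasureTheory
open scoped ENNReal Classical

noncomputable section

/-- Sites of the chain `[-L, L] ∩ ℤ`. -/
abbrev SiteIdx (L : ℕ) : Type := {i : ℤ // i ∈ Finset.Icc (-(L:ℤ)) (L:ℤ)}

/-- Spin configurations: `true` = spin down. -/
abbrev Cfg (L : ℕ) : Type := SiteIdx L → Bool

/-- The Hilbert space `ℋ^{(L)} = ⊗_{i=-L}^{L} ℂ²`, realized with the spin-configuration basis. -/
abbrev HSp (L : ℕ) : Type := EuclideanSpace ℂ (Cfg L)

/-- Operators on `ℋ^{(L)}`. -/
abbrev Op (L : ℕ) : Type := HSp L →L[ℂ] HSp L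

def spinDownAt (L : ℕ) (i : ℤ) (c : Cfg L) : Prop :=
  ∃ j : SiteIdx L, (j : ℤ) = i ∧ c j = true

def flipAt (L : ℕ) (i : ℤ) (c : Cfg L) : Cfg L :=
  fun j => if (j : ℤ) = i then !(c j) else c j

/-- The Pauli matrix `σ^x_i`. -/
def sigX (L : ℕ) (i : ℤ) : Matrix (Cfg L) (Cfg L) ℂ :=
  Matrix.of fun c c' => if c = flipAt L i c' then 1 else 0

/-- The Pauli matrix `σ^y_i`. -/
def sigY (L : ℕ) (i : ℤ) : Matrix (Cfg L) (Cfg L) ℂ :=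
  Matrix.of fun c c' =>
    if c = flipAt L i c' then (if spinDownAt L i c' then -Complex.I else Complex.I) else 0

/-- The Pauli matrix `σ^z_i`. -/
def sigZ (L : ℕ) (i : ℤ) : Matrix (Cfg L) (Cfg L) ℂ :=
  Matrix.diagonal fun c => if spinDownAt L i c then -1 else 1

/-- The local number operator `𝒩_i = (1 - σ^z_i)/2`. -/
def numM (L : ℕ) (i : ℤ) : Matrix (Cfg L) (Cfg L) ℂ :=
  Matrix.diagonal fun c => if spinDownAt L i c then 1 else 0

def toOp (L : ℕ) (M : Matrix (Cfg L) (Cfg L) ℂ) : Op L :=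
  Matrix.toEuclideanCLM (𝕜 := ℂ) M

def toMat (L : ℕ) (A : Op L) : Matrix (Cfg L) (Cfg L) ℂ :=
  (Matrix.toEuclideanCLM (𝕜 := ℂ) (n := Cfg L)).symm A

/-- The local next-neighbour Hamiltonian `h_{i,i+1}`. -/
def hLoc (Δ : ℝ) (L : ℕ) (i : ℤ) : Matrix (Cfg L) (Cfg L) ℂ :=
  (4:ℂ)⁻¹ • ((1 : Matrix (Cfg L) (Cfg L) ℂ) - sigZ L i * sigZ L (i+1))
  - (((4*Δ)⁻¹ : ℝ) : ℂ) • (sigX L i * sigX L (i+1) + sigY L i * sigY L (i+1))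

/-- The XXZ Hamiltonian `H_ω^{(L)}` with droplet boundary term. -/
def ham (Δ lam β : ℝ) (L : ℕ) (ω : ℤ → ℝ) : Op L :=
  toOp L
    ((∑ i ∈ Finset.Icc (-(L:ℤ)) ((L:ℤ)-1), hLoc Δ L i)
     + (lam : ℂ) • (∑ i ∈ Finset.Icc (-(L:ℤ)) (L:ℤ), ((ω i : ℝ) : ℂ) • numM L i)
     + (β : ℂ) • (numM L (-(L:ℤ)) + numM L (L:ℤ)))

def numOp (L : ℕ) (i : ℤ) : Op L := toOp L (numM L i)

def sigXOp (L : ℕ) (i : ℤ) : Op L := toOp L (sigX L i)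

/-- `g(A)` for a bounded Borel `g : ℝ → ℂ` (finite dimensions, via continuous functional
calculus; the spectrum is finite, so every function is continuous on it). -/
def opFun (L : ℕ) (g : ℝ → ℂ) (A : Op L) : Op L := cfc (fun z : ℂ => g z.re) A

/-- `f(A)` for real-valued `f`. -/
def opFunR (L : ℕ) (f : ℝ → ℝ) (A : Op L) : Op L := cfc f A

/-- The spectral projection `P_B = χ_B(A)`. -/
def specProj (L : ℕ) (B : Set ℝ) (A : Op L) : Op L :=
  opFun L (fun x => if x ∈ B then 1 else 0) A

/-- `e^{itA}`. -/
def expIt (L : ℕ) (t : ℝ) (A : Op L) : Op L :=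
  opFun L (fun x => Complex.exp (Complex.I * t * x)) A

/-- Heisenberg evolution `e^{itA} X e^{-itA}`. -/
def heis (L : ℕ) (t : ℝ) (A X : Op L) : Op L := expIt L t A * X * expIt L (-t) A

/-- `X_B = P_B X P_B`. -/
def wind (L : ℕ) (B : Set ℝ) (A X : Op L) : Op L := specProj L B A * X * specProj L B A

/-- The trace norm `‖T‖₁`. -/
def traceNorm (L : ℕ) (T : Op L) : ℝ :=
  (Matrix.trace (toMat L (cfc Real.sqrt (star T * T)))).re

/-- The squared Hilbert–Schmidt norm `‖T‖₂²`. -/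
def hsNormSq (L : ℕ) (T : Op L) : ℝ := (Matrix.trace (toMat L (star T * T))).re

def opTrace (L : ℕ) (T : Op L) : ℂ := Matrix.trace (toMat L T)

/-- A matrix acts only on the sites in `S` (it is of the form `X_S ⊗ Id`). -/
def MatSupportedOn (L : ℕ) (M : Matrix (Cfg L) (Cfg L) ℂ) (S : Set ℤ) : Prop :=
  (∀ c c' : Cfg L, (∃ j : SiteIdx L, ((j:ℤ) ∉ S ∧ c j ≠ c' j)) → M c c' = 0) ∧
  (∀ c c' d d' : Cfg L,
     (∀ j : SiteIdx L, (j:ℤ) ∈ S → c j = d j ∧ c' j = d' j) →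
     (∀ j : SiteIdx L, (j:ℤ) ∉ S → c j = c' j ∧ d j = d' j) →
     M c c' = M d d')

/-- Local observable with support `[s, r] ⊂ [-L, L]`. -/
def IsLocalObs (L : ℕ) (X : Op L) (s r : ℤ) : Prop :=
  -(L:ℤ) ≤ s ∧ s ≤ r ∧ r ≤ (L:ℤ) ∧ MatSupportedOn L (toMat L X) (Set.Icc s r)

/-- Distance of the supports `[sX, rX]` and `[sY, rY]`. -/
def suppDist (sX rX sY rY : ℤ) : ℤ := max 0 (max (sY - rX) (sX - rY))

/-- `P_+^{(S)}`: all spins in `S` up. -/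
def pPlus (L : ℕ) (S : Set ℤ) : Op L :=
  toOp L (Matrix.diagonal fun c => if ∀ j : SiteIdx L, (j:ℤ) ∈ S → c j = false then 1 else 0)

def pMinus (L : ℕ) (S : Set ℤ) : Op L := 1 - pPlus L S

/-- Borel functions dominated by the indicator function of `J`. -/
def GJ (J : Set ℝ) : Set (ℝ → ℂ) :=
  {g | Measurable g ∧ ∀ x : ℝ, ‖g x‖ ≤ Set.indicator J (fun _ => (1:ℝ)) x}

/-- Property DL (droplet localization) in the interval `I = [1 - 1/Δ, Θ₁]`,
with constants `CDL` and `m`. -/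
def PropertyDL (Δ lam β Θ₁ CDL m : ℝ) (ℙ : Measure (ℤ → ℝ)) : Prop :=
  ∀ L : ℕ, ∀ i j : ℤ, i ∈ Finset.Icc (-(L:ℤ)) (L:ℤ) → j ∈ Finset.Icc (-(L:ℤ)) (L:ℤ) →
    (∫⁻ ω, ⨆ g ∈ GJ (Set.Icc (1 - 1/Δ) Θ₁),
        ENNReal.ofReal (traceNorm L (numOp L i * opFun L g (ham Δ lam β L ω) * numOp L j)) ∂ℙ)
      ≤ ENNReal.ofReal (CDL * Real.exp (-m * ((|i - j| : ℤ) : ℝ)))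

/-- Disordered XXZ spin chain in the Ising phase: `Δ > 1`, `λ > 0`,
`β ≥ (1/2)(1 - 1/Δ)`, and `ω` distributed according to a shift-ergodic probability
measure on `[0,1]^ℤ` with identical single-site marginals `μ` such that
`{0,1} ⊂ supp μ ⊂ [0,1]` and `μ({0}) = 0`. -/
def IsDisorderedXXZ (Δ lam β : ℝ) (ℙ : Measure (ℤ → ℝ)) (μ : Measure ℝ) : Prop :=
  1 < Δ ∧ 0 < lam ∧ (1/2) * (1 - 1/Δ) ≤ β ∧
  IsProbabilityMeasure ℙ ∧ IsProbabilityMeasure μ ∧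
  (∀ᵐ ω ∂ℙ, ∀ i : ℤ, ω i ∈ Set.Icc (0:ℝ) 1) ∧
  Ergodic (fun (ω : ℤ → ℝ) (i : ℤ) => ω (i+1)) ℙ ∧
  (∀ i : ℤ, ℙ.map (fun ω => ω i) = μ) ∧
  μ {0} = 0 ∧ μ (Set.Icc (0:ℝ) 1)ᶜ = 0 ∧
  (∀ ε : ℝ, 0 < ε → 0 < μ (Set.Ioo (-ε) ε) ∧ 0 < μ (Set.Ioo (1-ε) (1+ε)))

/-- Random XXZ spin chain: in addition the `ω_i` are independent. -/
def IsRandomXXZ (Δ lam β : ℝ) (ℙ : Measure (ℤ → ℝ)) (μ : Measure ℝ) : Prop :=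
  IsDisorderedXXZ Δ lam β ℙ μ ∧
  ProbabilityTheory.iIndepFun
    (fun (i : ℤ) (ω : ℤ → ℝ) => ω i) ℙ

/-- The interval `I = [Θ₀, Θ₁]`. -/
def ivI (Δ Θ₁ : ℝ) : Set ℝ := Set.Icc (1 - 1/Δ) Θ₁

/-- The interval `I₀ = [0, Θ₁]`. -/
def ivI0 (Θ₁ : ℝ) : Set ℝ := Set.Icc (0:ℝ) Θ₁

/-- The commutator. -/
def commut (L : ℕ) (A B : Op L) : Op L := A * B - B * A

/-- The Fourier transform `f̂(t) = (2π)⁻¹ ∫ e^{itx} f(x) dx`. -/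
def fhat (f : ℝ → ℝ) (t : ℝ) : ℂ :=
  (((2 * Real.pi)⁻¹ : ℝ) : ℂ) * ∫ x : ℝ, Complex.exp (Complex.I * t * x) * (f x : ℂ)

end


/-- Spectral projection `χ_B(H)` for a self-adjoint operator on a
finite-dimensional complex Hilbert space. -/
noncomputable def sProj {E : Type*} [NormedAddCommGroup E] [InnerProductSpace ℂ E] [FiniteDimensional ℂ E]
    (H : E →L[ℂ] E) (B : Set ℝ) : E →L[ℂ] E :=
  cfc (fun z : ℂ => if z.re ∈ B then (1:ℂ) else 0) H

/-- `e^{itH}`. -/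
noncomputable def sExpIt {E : Type*} [NormedAddCommGroup E] [InnerProductSpace ℂ E] [FiniteDimensional ℂ E]
    (H : E →L[ℂ] E) (t : ℝ) : E →L[ℂ] E :=
  cfc (fun z : ℂ => Complex.exp (Complex.I * t * z.re)) H

noncomputable section AuxInsertion
variable {E : Type*} [NormedAddCommGroup E] [InnerProductSpace ℂ E] [FiniteDimensional ℂ E]

lemma spec_finite (H : E →L[ℂ] E) : (spectrum ℂ H).Finite := by
  have := AlgEquiv.spectrum_eq (Module.End.toContinuousLinearMap E (𝕜 := ℂ))
    ((Module.End.toContinuousLinearMap E (𝕜 := ℂ)).symm H)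
  simp only [AlgEquiv.apply_symm_apply] at this
  rw [this]
  exact Module.End.finite_spectrum _

lemma contOn (H : E →L[ℂ] E) (g : ℂ → ℂ) : ContinuousOn g (spectrum ℂ H) :=
  (spec_finite H).continuousOn g

def Pj (H : E →L[ℂ] E) (l : ℂ) : E →L[ℂ] E := cfc (fun z : ℂ => if z = l then (1:ℂ) else 0) H

lemma cfc_eq_sum (H : E →L[ℂ] E) (hH : IsStarNormal H) (g : ℂ → ℂ) :
    cfc g H = ∑ l ∈ (spec_finite H).toFinset, g l • Pj H l := by
  have h1 : ∀ l ∈ (spec_finite H).toFinset, g l • Pj H l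
      = cfc (fun z => g l • (if z = l then (1:ℂ) else 0)) H := fun l _ =>
    (cfc_smul (g l) _ H (contOn H _)).symm
  rw [Finset.sum_congr rfl h1, ← cfc_sum _ H _ (fun i _ => contOn H _)]
  apply cfc_congr
  intro z hz
  simp only [Finset.sum_apply, smul_eq_mul, mul_ite, mul_one, mul_zero]
  rw [Finset.sum_ite_eq ((spec_finite H).toFinset) z g]
  simp [Set.Finite.mem_toFinset, hz]

lemma expand3 (H X Y : E →L[ℂ] E) (hH : IsStarNormal H) (g₁ g₂ g₃ : ℂ → ℂ) :
    cfc g₁ H * Y * (cfc g₂ H * X * cfc g₃ H)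
    = ∑ n ∈ (spec_finite H).toFinset, ∑ m ∈ (spec_finite H).toFinset,
        ∑ l ∈ (spec_finite H).toFinset,
        (g₃ n * (g₂ m * g₁ l)) • (Pj H l * Y * (Pj H m * X * Pj H n)) := by
  rw [cfc_eq_sum H hH g₁, cfc_eq_sum H hH g₂, cfc_eq_sum H hH g₃]
  simp only [Finset.sum_mul, Finset.mul_sum, smul_mul_assoc, mul_smul_comm,
    Finset.smul_sum, smul_smul, mul_assoc]

open FourierTransform in
lemma key_int (f : ℝ → ℝ) (hfsm : ContDiff ℝ (⊤ : ℕ∞) f) (hfc : HasCompactSupport f) (θ : ℝ) :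
    Integrable (fun r : ℝ => fhat f r * Complex.exp (Complex.I * r * θ)) ∧
    ∫ r : ℝ, fhat f r * Complex.exp (Complex.I * r * θ) = ((f (-θ) : ℝ) : ℂ) := by
  set fc : ℝ → ℂ := fun x => (f x : ℂ) with hfc_def
  have hsm : ContDiff ℝ (⊤ : ℕ∞) fc := Complex.ofRealCLM.contDiff.comp hfsm
  have hcs : HasCompactSupport fc := hfc.comp_left (g := Complex.ofReal) rfl
  have hdecay : ∀ k n : ℕ, ∃ C : ℝ, ∀ x, ‖x‖ ^ k * ‖iteratedFDeriv ℝ n fc x‖ ≤ C := by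
    intro k n
    have h1 : Continuous fun x => ‖x‖ ^ k * ‖iteratedFDeriv ℝ n fc x‖ :=
      (continuous_norm.pow k).mul (hsm.continuous_iteratedFDeriv (by exact_mod_cast le_top)).norm
    have h2 : HasCompactSupport fun x => ‖x‖ ^ k * ‖iteratedFDeriv ℝ n fc x‖ :=
      ((hcs.iteratedFDeriv n).norm).mul_left
    obtain ⟨C, hC⟩ := h1.bounded_above_of_compact_support h2
    exact ⟨C, fun x => (le_abs_self _).trans ((Real.norm_eq_abs _) ▸ hC x)⟩
  set F : SchwartzMap ℝ ℂ := ⟨fc, hsm.of_le (by simp), hdecay⟩ with hF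
  have hint : Integrable fc := F.integrable
  have hint2 : Integrable (𝓕 fc) := by
    have : 𝓕 fc = (SchwartzMap.fourierTransformCLM ℂ F : ℝ → ℂ) := rfl
    rw [this]
    exact (SchwartzMap.fourierTransformCLM ℂ F).integrable
  have hpi : (2 * Real.pi) ≠ 0 := by positivity
  have hfhat : ∀ t : ℝ, fhat f t
      = (((2 * Real.pi)⁻¹ : ℝ) : ℂ) * 𝓕 fc (-(2 * Real.pi)⁻¹ * t) := by
    intro t
    rw [fhat, Real.fourier_eq']
    congr 1
    refine integral_congr_ae (Filter.Eventually.of_forall fun x => ?_)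
    simp only [RCLike.inner_apply, starRingEnd_apply, star_trivial, smul_eq_mul]
    have hπc : ((Real.pi : ℝ) : ℂ) ≠ 0 := by exact_mod_cast Real.pi_ne_zero
    congr 2
    push_cast
    field_simp
  have hcont_exp : ∀ θ' : ℝ, Continuous fun r : ℝ => Complex.exp (Complex.I * r * θ') :=
    fun θ' => Complex.continuous_exp.comp (by continuity)
  have hnorm_exp : ∀ (θ' r : ℝ), ‖Complex.exp (Complex.I * r * θ')‖ = 1 := by
    intro θ' r
    rw [Complex.norm_exp]
    simp [Complex.mul_re]
  have hintgr : Integrable (fun r : ℝ => fhat f r * Complex.exp (Complex.I * r * θ)) := by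
    have h1 : Integrable (fun r : ℝ => 𝓕 fc (-(2 * Real.pi)⁻¹ * r)) :=
      hint2.comp_mul_left' (by simpa using hpi)
    have h2 := (h1.bdd_mul (c := 1) ((hcont_exp θ).aestronglyMeasurable)
      (Filter.Eventually.of_forall fun r => le_of_eq (hnorm_exp θ r))).const_mul (((2 * Real.pi)⁻¹ : ℝ) : ℂ)
    refine h2.congr (Filter.Eventually.of_forall fun r => ?_)
    simp only
    rw [hfhat r]; ring
  refine ⟨hintgr, ?_⟩
  have hsub := MeasureTheory.Measure.integral_comp_mul_left
    (fun r : ℝ => fhat f r * Complex.exp (Complex.I * r * θ)) (-(2 * Real.pi))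
  have hval : ∀ x : ℝ, fhat f (-(2 * Real.pi) * x)
        * Complex.exp (Complex.I * ((-(2 * Real.pi) * x : ℝ) : ℂ) * θ)
      = (((2 * Real.pi)⁻¹ : ℝ) : ℂ)
        * (Complex.exp ((((-2) * Real.pi * (x * θ) : ℝ) : ℂ) * Complex.I) • 𝓕 fc x) := by
    intro x
    rw [hfhat]
    have hx : -(2 * Real.pi)⁻¹ * (-(2 * Real.pi) * x) = x := by
      field_simp
    rw [hx, smul_eq_mul]
    ring_nf
    congr 2
    push_cast
    ring
  simp only [hval] at hsub
  -- hsub : ∫ x, c * (exp • 𝓕 fc x) = |(-(2π))⁻¹| • ∫ F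
  have h𝓕𝓕 : ∫ x : ℝ, Complex.exp ((((-2) * Real.pi * (x * θ) : ℝ) : ℂ) * Complex.I) • 𝓕 fc x
      = fc (-θ) := by
    have h1 : ∫ x : ℝ, Complex.exp ((((-2) * Real.pi * (x * θ) : ℝ) : ℂ) * Complex.I) • 𝓕 fc x
        = 𝓕 (𝓕 fc) θ := by
      rw [Real.fourier_eq']
      refine integral_congr_ae (Filter.Eventually.of_forall fun x => ?_)
      simp [RCLike.inner_apply, starRingEnd_apply]
      left
      ring_nf
    rw [h1]
    have h2 : 𝓕 (𝓕 fc) θ = 𝓕⁻ (𝓕 fc) (-θ) := by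
      rw [Real.fourierInv_eq_fourier_neg, neg_neg]
    rw [h2, (hsm.continuous).fourierInv_fourier_eq hint hint2]
  rw [MeasureTheory.integral_const_mul, h𝓕𝓕] at hsub
  -- hsub : c * fc (-θ) = |(-(2π))⁻¹| • ∫ F
  have habs : |(-(2 * Real.pi))⁻¹| = (2 * Real.pi)⁻¹ := by
    rw [abs_inv, abs_neg, abs_of_pos (by positivity)]
  rw [habs] at hsub
  have h2π : ((2 * Real.pi : ℝ) : ℂ) ≠ 0 := by exact_mod_cast hpi
  calc ∫ r : ℝ, fhat f r * Complex.exp (Complex.I * r * θ)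
      = ((2 * Real.pi : ℝ) : ℂ) * ((((2 * Real.pi)⁻¹ : ℝ) : ℂ)
        * ∫ r : ℝ, fhat f r * Complex.exp (Complex.I * r * θ)) := by
        rw [← mul_assoc, ← Complex.ofReal_mul, mul_inv_cancel₀ hpi]
        simp
    _ = ((2 * Real.pi : ℝ) : ℂ) * ((((2 * Real.pi)⁻¹ : ℝ) : ℂ) * fc (-θ)) := by
        rw [Complex.real_smul] at hsub
        rw [← hsub]
    _ = fc (-θ) := by
        rw [← mul_assoc, ← Complex.ofReal_mul, mul_inv_cancel₀ hpi]
        simp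

lemma integral_triple_sum {E : Type*} [NormedAddCommGroup E] [NormedSpace ℂ E] [CompleteSpace E]
    (s : Finset ℂ) (c : ℂ → ℂ → ℂ → ℝ → ℂ) (T : ℂ → ℂ → ℂ → E)
    (hc : ∀ l m n, Integrable (c l m n)) :
    ∫ r : ℝ, ∑ n ∈ s, ∑ m ∈ s, ∑ l ∈ s, c l m n r • T l m n
      = ∑ n ∈ s, ∑ m ∈ s, ∑ l ∈ s, (∫ r : ℝ, c l m n r) • T l m n := by
  rw [MeasureTheory.integral_finset_sum _ (fun n _ => integrable_finset_sum _
    (fun m _ => integrable_finset_sum _ (fun l _ => (hc l m n).smul_const _)))]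
  refine Finset.sum_congr rfl fun n _ => ?_
  rw [MeasureTheory.integral_finset_sum _ (fun m _ => integrable_finset_sum _
    (fun l _ => (hc l m n).smul_const _))]
  refine Finset.sum_congr rfl fun m _ => ?_
  rw [MeasureTheory.integral_finset_sum _ (fun l _ => (hc l m n).smul_const _)]
  exact Finset.sum_congr rfl fun l _ => integral_smul_const _ _

end AuxInsertion

/-- Spectral insertion identity, Lemma 3.6. -/
theorem spectral_insertion_identity
    {E : Type*} [NormedAddCommGroup E] [InnerProductSpace ℂ E] [FiniteDimensional ℂ E]
    (H X Y : E →L[ℂ] E) (hH : IsSelfAdjoint H)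
    (Θ₀ Θ₂ af bf : ℝ) (hK : Θ₀ ≤ Θ₂) (hf : af ≤ bf)
    (f : ℝ → ℝ) (hfsm : ContDiff ℝ (⊤ : ℕ∞) f) (hfc : HasCompactSupport f)
    (hfsup : tsupport f ⊆ Set.Icc af bf) :
    (∫ r : ℝ, fhat f r •
        (sProj H (Set.Icc Θ₀ Θ₂) *
          (sExpIt H (-r) * Y * (sExpIt H r * X * sExpIt H (-r))) *
          sProj H (Set.Icc Θ₀ Θ₂)))
    = ∫ r : ℝ, fhat f r •
        (sProj H (Set.Icc Θ₀ Θ₂) *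
          (sExpIt H (-r) * Y * sProj H (Set.Icc (2*Θ₀ - bf) (2*Θ₂ - af)) *
            (sExpIt H r * X * sExpIt H (-r))) *
          sProj H (Set.Icc Θ₀ Θ₂)) := by
  have hN : IsStarNormal H := hH.isStarNormal
  set s : Finset ℂ := (spec_finite H).toFinset with hs
  set K : Set ℝ := Set.Icc Θ₀ Θ₂ with hKdef
  set Kf : Set ℝ := Set.Icc (2*Θ₀ - bf) (2*Θ₂ - af) with hKfdef
  set χK : ℂ → ℂ := fun z => if z.re ∈ K then (1:ℂ) else 0 with hχK
  set χF : ℂ → ℂ := fun z => if z.re ∈ Kf then (1:ℂ) else 0 with hχF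
  set e : ℝ → ℂ → ℂ := fun t z => Complex.exp (Complex.I * t * z.re) with he
  set T : ℂ → ℂ → ℂ → (E →L[ℂ] E) := fun l m n => Pj H l * Y * (Pj H m * X * Pj H n) with hT
  set θ : ℂ → ℂ → ℂ → ℝ := fun l m n => m.re - n.re - l.re with hθ
  set cL : ℂ → ℂ → ℂ → ℝ → ℂ := fun l m n r =>
    (χK n * χK l) * (fhat f r * Complex.exp (Complex.I * r * (θ l m n : ℂ))) with hcL
  set cR : ℂ → ℂ → ℂ → ℝ → ℂ := fun l m n r =>
    (χK n * (χK l * χF m)) * (fhat f r * Complex.exp (Complex.I * r * (θ l m n : ℂ))) with hcR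
  have hexp : ∀ (r : ℝ) (l m n : ℂ), e (-r) n * (e r m * e (-r) l)
      = Complex.exp (Complex.I * r * (θ l m n : ℂ)) := by
    intro r l m n
    simp only [he, hθ, ← Complex.exp_add]
    congr 1
    push_cast
    ring
  -- LHS integrand
  have hL : ∀ r : ℝ, fhat f r •
        (sProj H K * (sExpIt H (-r) * Y * (sExpIt H r * X * sExpIt H (-r))) * sProj H K)
      = ∑ n ∈ s, ∑ m ∈ s, ∑ l ∈ s, cL l m n r • T l m n := by
    intro r
    have h1 : sProj H K * (sExpIt H (-r) * Y * (sExpIt H r * X * sExpIt H (-r))) * sProj H K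
        = cfc (fun z => χK z * e (-r) z) H * Y
          * (cfc (e r) H * X * cfc (fun z => e (-r) z * χK z) H) := by
      rw [cfc_mul _ _ H (contOn H _) (contOn H _), cfc_mul _ _ H (contOn H _) (contOn H _)]
      simp only [he, hχK, hχF, sProj, sExpIt, mul_assoc]
      congr!
    rw [h1, expand3 H X Y hN]
    simp only [Finset.smul_sum, smul_smul]
    refine Finset.sum_congr rfl fun n _ => Finset.sum_congr rfl fun m _ =>
      Finset.sum_congr rfl fun l _ => ?_
    congr 1
    rw [show (e (-r) n * χK n) * (e r m * (χK l * e (-r) l))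
        = (χK n * χK l) * (e (-r) n * (e r m * e (-r) l)) by ring, hexp r l m n, hcL]
    ring
  -- RHS integrand
  have hR : ∀ r : ℝ, fhat f r •
        (sProj H K * (sExpIt H (-r) * Y * sProj H Kf * (sExpIt H r * X * sExpIt H (-r)))
          * sProj H K)
      = ∑ n ∈ s, ∑ m ∈ s, ∑ l ∈ s, cR l m n r • T l m n := by
    intro r
    have h1 : sProj H K * (sExpIt H (-r) * Y * sProj H Kf * (sExpIt H r * X * sExpIt H (-r)))
          * sProj H K
        = cfc (fun z => χK z * e (-r) z) H * Y
          * (cfc (fun z => χF z * e r z) H * X * cfc (fun z => e (-r) z * χK z) H) := by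
      rw [cfc_mul _ _ H (contOn H _) (contOn H _), cfc_mul _ _ H (contOn H _) (contOn H _),
        cfc_mul _ _ H (contOn H _) (contOn H _)]
      simp only [he, hχK, hχF, sProj, sExpIt, mul_assoc]
      congr!
    rw [h1, expand3 H X Y hN]
    simp only [Finset.smul_sum, smul_smul]
    refine Finset.sum_congr rfl fun n _ => Finset.sum_congr rfl fun m _ =>
      Finset.sum_congr rfl fun l _ => ?_
    congr 1
    rw [show (e (-r) n * χK n) * ((χF m * e r m) * (χK l * e (-r) l))
        = (χK n * (χK l * χF m)) * (e (-r) n * (e r m * e (-r) l)) by ring, hexp r l m n, hcR]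
    ring
  rw [MeasureTheory.integral_congr_ae (Filter.Eventually.of_forall hL),
    MeasureTheory.integral_congr_ae (Filter.Eventually.of_forall hR),
    integral_triple_sum s cL T (fun l m n => ((key_int f hfsm hfc (θ l m n)).1.const_mul _)),
    integral_triple_sum s cR T (fun l m n => ((key_int f hfsm hfc (θ l m n)).1.const_mul _))]
  refine Finset.sum_congr rfl fun n _ => Finset.sum_congr rfl fun m _ =>
    Finset.sum_congr rfl fun l _ => ?_
  congr 1
  rw [hcL, hcR]
  simp only [MeasureTheory.integral_const_mul, (key_int f hfsm hfc (θ l m n)).2]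
  by_cases hn : n.re ∈ K
  · by_cases hl : l.re ∈ K
    · by_cases hm : m.re ∈ Kf
      · simp [hχK, hχF, hn, hl, hm]
      · have hzero : f (-(θ l m n)) = 0 := by
          apply image_eq_zero_of_notMem_tsupport
          intro hmem
          have hmem2 := hfsup hmem
          simp only [hθ, Set.mem_Icc] at hmem2
          rw [hKfdef, Set.mem_Icc, not_and_or] at hm
          rw [hKdef, Set.mem_Icc] at hn hl
          rcases hm with hm | hm
          · push_neg at hm
            have : bf < n.re + l.re - m.re := by linarith
            linarith [hmem2.2, this]
          · push_neg at hm
            have : n.re + l.re - m.re < af := by linarith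
            linarith [hmem2.1, this]
        rw [show -(θ l m n) = -(θ l m n) from rfl] at hzero
        simp [hzero]
    · simp [hχK, hl]
  · simp [hχK, hn]
end

section
/- A priori bound on transition probabilities between Fermi projections for spin chains: Let H = Σ_{i=−L}^{L−1} Y_{i,i+1} be a self-adjoint operator on ℋ^(L) = ⊗_{i=−L}^{L} ℂ², where each Y_{i,i+1} is a self-adjoint local observable with support [i, i+1] and max_{i∈[−L,L−1]} ‖Y_{i,i+1}‖ ≤ θ < ∞. Then there exist constants m_F > 0 and C_F < ∞, depending only on θ and independent of L, such that for every local observable X and all energies E < E′: ‖ χ_{(−∞,E]}(H) · X · (1 − χ_{(−∞,E′]}(H)) ‖ ≤ C_F ‖X‖ e^{−(m_F/|𝒮_X|)(E′ − E)}. -/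
open MeasureTheory
open scoped ENNReal Classical

/-!
Combes–Thomas argument. For `τ > 0`,
`P_E X (1 - P_{E'}) = (P_E e^{τH}) (e^{-τH} X e^{τH}) (e^{-τH} (1 - P_{E'}))`,
and the functional calculus bounds the outer factors by `e^{τE}` and `e^{-τE'}`.
By Hadamard's formula `e^{-τH} X e^{τH} = ∑ₙ (τⁿ / n!) (ad_H)ⁿ X`, and since `H` is a sum of
nearest-neighbour terms, `(ad_H)ⁿ X` lives on `|𝒮_X| + 2n` sites and has norm at most
`∏_{k<n} 2θ (|𝒮_X| + 2k + 1) ‖X‖`. For `τ = 1 / (4θ (|𝒮_X| + 1))` the series is dominated by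
`∑ₙ 2⁻ⁿ ‖X‖ = 2 ‖X‖`.
-/

open NormedSpace
open scoped Nat

noncomputable section

section Hadamard

variable {𝕂 A : Type*} [RCLike 𝕂] [NormedRing A] [NormedAlgebra 𝕂 A]

variable (𝕂) in
def mulLeftRingHom : A →+* (A →L[𝕂] A) where
  toFun := ContinuousLinearMap.mul 𝕂 A
  map_one' := ContinuousLinearMap.ext one_mul
  map_mul' _ _ := ContinuousLinearMap.ext fun _ => mul_assoc _ _ _
  map_zero' := map_zero _
  map_add' := map_add _

variable (𝕂) in
def mulRightRingHom : Aᵐᵒᵖ →+* (A →L[𝕂] A) where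
  toFun c := (ContinuousLinearMap.mul 𝕂 A).flip c.unop
  map_one' := ContinuousLinearMap.ext mul_one
  map_mul' _ _ := ContinuousLinearMap.ext fun _ => (mul_assoc _ _ _).symm
  map_zero' := by simp
  map_add' _ _ := by simp

variable (𝕂) in
def adCLM : A →L[𝕂] A →L[𝕂] A := ContinuousLinearMap.mul 𝕂 A - (ContinuousLinearMap.mul 𝕂 A).flip

@[simp] lemma adCLM_apply (B Z : A) : adCLM 𝕂 B Z = B * Z - Z * B := rfl

lemma norm_adCLM_apply_le (B Z : A) : ‖adCLM 𝕂 B Z‖ ≤ 2 * ‖B‖ * ‖Z‖ := by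
  rw [adCLM_apply]
  linarith [norm_sub_le (B * Z) (Z * B), norm_mul_le B Z, norm_mul_le Z B,
    mul_comm ‖Z‖ ‖B‖]

variable (𝕂) in
lemma mem_eball_radius_expSeries {E : Type*} [NormedRing E] [NormedAlgebra 𝕂 E] (x : E) :
    x ∈ Metric.eball (0 : E) (expSeries 𝕂 E).radius := by
  simp [expSeries_radius_eq_top]

variable [CompleteSpace A]

lemma exp_mulLeftRingHom (B : A) : exp (mulLeftRingHom 𝕂 B) = mulLeftRingHom 𝕂 (exp B) :=
  (map_exp_of_mem_ball (mulLeftRingHom 𝕂) (ContinuousLinearMap.mul 𝕂 A).continuous B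
    (mem_eball_radius_expSeries 𝕂 B)).symm

lemma exp_mulRightRingHom (B : Aᵐᵒᵖ) : exp (mulRightRingHom 𝕂 B) = mulRightRingHom 𝕂 (exp B) :=
  (map_exp_of_mem_ball (mulRightRingHom 𝕂)
    ((ContinuousLinearMap.mul 𝕂 A).flip.continuous.comp MulOpposite.continuous_unop) B
    (mem_eball_radius_expSeries 𝕂 B)).symm

lemma exp_mul_mul_exp_neg (B X : A) : exp B * X * exp (-B) = exp (adCLM 𝕂 B) X := by
  have hcomm : Commute (mulLeftRingHom 𝕂 B) (mulRightRingHom 𝕂 (MulOpposite.op (-B))) :=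
    ContinuousLinearMap.ext fun Z => by simp [mulLeftRingHom, mulRightRingHom, mul_assoc]
  have had : adCLM 𝕂 B = mulLeftRingHom 𝕂 B + mulRightRingHom 𝕂 (MulOpposite.op (-B)) :=
    ContinuousLinearMap.ext fun Z => by simp [mulLeftRingHom, mulRightRingHom, sub_eq_add_neg]
  rw [had, exp_add_of_commute_of_mem_ball hcomm (mem_eball_radius_expSeries 𝕂 _)
    (mem_eball_radius_expSeries 𝕂 _), exp_mulLeftRingHom, exp_mulRightRingHom, exp_op]
  exact mul_assoc _ _ _

lemma hasSum_exp_mul_mul_exp_neg (B X : A) :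
    HasSum (fun n => (n !⁻¹ : 𝕂) • (adCLM 𝕂 B ^ n) X) (exp B * X * exp (-B)) := by
  rw [exp_mul_mul_exp_neg (𝕂 := 𝕂)]
  exact (exp_series_hasSum_exp' (𝕂 := 𝕂) (adCLM 𝕂 B)).mapL (ContinuousLinearMap.apply 𝕂 A X)

lemma norm_exp_mul_mul_exp_neg_le (B X : A) {C : ℝ}
    (h : ∀ n, ‖(adCLM 𝕂 B ^ n) X‖ ≤ C * n ! / 2 ^ n) :
    ‖exp B * X * exp (-B)‖ ≤ 2 * C := by
  have hterm (n : ℕ) : ‖(n !⁻¹ : 𝕂) • (adCLM 𝕂 B ^ n) X‖ ≤ C * (1 / 2) ^ n := by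
    rw [norm_smul, norm_inv, RCLike.norm_natCast, inv_mul_le_iff₀ (by positivity)]
    calc ‖(adCLM 𝕂 B ^ n) X‖ ≤ C * n ! / 2 ^ n := h n
      _ = n ! * (C * (1 / 2) ^ n) := by rw [one_div_pow]; ring
  have hgeom := hasSum_geometric_two.mul_left C
  convert (hasSum_exp_mul_mul_exp_neg (𝕂 := 𝕂) B X).norm_le_of_bounded hgeom hterm using 1
  ring

lemma norm_exp_neg_smul_mul_mul_exp_smul_le (c : 𝕂) (B X : A) {C : ℝ}
    (h : ∀ n, ‖(adCLM 𝕂 ((-c) • B) ^ n) X‖ ≤ C * n ! / 2 ^ n) :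
    ‖exp ((-c) • B) * X * exp (c • B)‖ ≤ 2 * C := by
  simpa only [neg_smul, neg_neg] using norm_exp_mul_mul_exp_neg_le ((-c) • B) X h

lemma exp_smul_mul_exp_neg_smul_mul (c : 𝕂) (B Z : A) :
    exp (c • B) * (exp ((-c) • B) * Z) = Z := by
  rw [← mul_assoc, ← exp_add_of_commute_of_mem_ball ((Commute.refl B).smul_left c |>.smul_right _)
    (mem_eball_radius_expSeries 𝕂 _) (mem_eball_radius_expSeries 𝕂 _), ← add_smul,
    add_neg_cancel, zero_smul, exp_zero, one_mul]

end Hadamard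

namespace MatSupportedOn

variable {L : ℕ} {S T : Set ℤ} {M N : Matrix (Cfg L) (Cfg L) ℂ}

lemma mono (hM : MatSupportedOn L M S) (hST : S ⊆ T) : MatSupportedOn L M T := by
  refine ⟨fun c c' ⟨j, hj, hne⟩ => hM.1 c c' ⟨j, fun h => hj (hST h), hne⟩,
    fun c c' d d' hin hout => ?_⟩
  by_cases hcc : ∀ j : SiteIdx L, (j:ℤ) ∉ S → c j = c' j
  · refine hM.2 c c' d d' (fun j hj => hin j (hST hj)) fun j hj => ⟨hcc j hj, ?_⟩
    by_cases hjT : (j:ℤ) ∈ T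
    · rw [← (hin j hjT).1, ← (hin j hjT).2]
      exact hcc j hj
    · exact (hout j hjT).2
  · push Not at hcc
    obtain ⟨j, hjS, hne⟩ := hcc
    by_cases hjT : (j:ℤ) ∈ T
    · rw [hM.1 c c' ⟨j, hjS, hne⟩, hM.1 d d' ⟨j, hjS, ?_⟩]
      rwa [← (hin j hjT).1, ← (hin j hjT).2]
    · exact absurd (hout j hjT).1 hne

lemma algebraMap (a : ℂ) :
    MatSupportedOn L (algebraMap ℂ (Matrix (Cfg L) (Cfg L) ℂ) a) S := by
  have eq_iff_on (e e' : Cfg L) (h : ∀ j : SiteIdx L, (j:ℤ) ∉ S → e j = e' j) :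
      e = e' ↔ ∀ j : SiteIdx L, (j:ℤ) ∈ S → e j = e' j :=
    ⟨fun he _ _ => he ▸ rfl, fun he => funext fun j => by
      by_cases hj : (j:ℤ) ∈ S
      exacts [he j hj, h j hj]⟩
  refine ⟨fun c c' ⟨j, _, hne⟩ => ?_, fun c c' d d' hin hout => ?_⟩
  · rw [Matrix.algebraMap_matrix_apply, if_neg fun h : c = c' => hne (h ▸ rfl)]
  · simp only [Matrix.algebraMap_matrix_apply]
    congr 1
    rw [eq_iff_on c c' fun j hj => (hout j hj).1, eq_iff_on d d' fun j hj => (hout j hj).2]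
    exact propext <| forall₂_congr fun j hj => by rw [(hin j hj).1, (hin j hj).2]

lemma add (hM : MatSupportedOn L M S) (hN : MatSupportedOn L N S) :
    MatSupportedOn L (M + N) S :=
  ⟨fun c c' h => by simp [hM.1 c c' h, hN.1 c c' h],
    fun c c' d d' hin hout => by simp [hM.2 c c' d d' hin hout, hN.2 c c' d d' hin hout]⟩


lemma mul (hM : MatSupportedOn L M S) (hN : MatSupportedOn L N S) :
    MatSupportedOn L (M * N) S := by
  refine ⟨fun c c' ⟨j, hj, hne⟩ => Matrix.mul_apply.trans <| Finset.sum_eq_zero fun e _ => ?_,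
    fun c c' d d' hin hout => ?_⟩
  · by_cases he : c j = e j
    · rw [hN.1 e c' ⟨j, hj, he ▸ hne⟩, mul_zero]
    · rw [hM.1 c e ⟨j, hj, he⟩, zero_mul]
  -- `σ` keeps `e` on `S` and, off `S`, moves it from agreement with `c` to agreement with `d`.
  let σ : Cfg L → Cfg L := fun e j => if (j:ℤ) ∈ S then e j else xor (e j) (xor (c j) (d j))
  have hσ : σ.Involutive := fun e => funext fun j => by
    by_cases hj : (j:ℤ) ∈ S <;> simp [σ, hj]
  have hσ_in (e : Cfg L) (j : SiteIdx L) (hj : (j:ℤ) ∈ S) : σ e j = e j := if_pos hj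
  have hσ_out (e : Cfg L) (j : SiteIdx L) (hj : (j:ℤ) ∉ S) : σ e j = d j ↔ e j = c j := by
    simp only [σ, if_neg hj]
    cases e j <;> cases c j <;> cases d j <;> decide
  rw [Matrix.mul_apply, Matrix.mul_apply, ← Equiv.sum_comp hσ.toPerm (fun e => M d e * N e d')]
  refine Finset.sum_congr rfl fun e _ => ?_
  change M c e * N e c' = M d (σ e) * N (σ e) d'
  by_cases hec : ∀ j : SiteIdx L, (j:ℤ) ∉ S → e j = c j
  · have hσd (j : SiteIdx L) (hj : (j:ℤ) ∉ S) : σ e j = d j := (hσ_out e j hj).2 (hec j hj)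
    rw [hM.2 c e d (σ e) (fun j hj => ⟨(hin j hj).1, (hσ_in e j hj).symm⟩)
        (fun j hj => ⟨(hec j hj).symm, (hσd j hj).symm⟩),
      hN.2 e c' (σ e) d' (fun j hj => ⟨(hσ_in e j hj).symm, (hin j hj).2⟩)
        (fun j hj => ⟨(hec j hj).trans (hout j hj).1, (hσd j hj).trans (hout j hj).2⟩)]
  · push Not at hec
    obtain ⟨j, hj, hne⟩ := hec
    rw [hM.1 c e ⟨j, hj, Ne.symm hne⟩,
      hM.1 d (σ e) ⟨j, hj, fun h => hne ((hσ_out e j hj).1 h.symm)⟩, zero_mul, zero_mul]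

lemma mul_apply_of_disjoint (hM : MatSupportedOn L M S) (hN : MatSupportedOn L N T)
    (hST : Disjoint S T) (c c' : Cfg L) :
    (M * N) c c' = M c (fun j => if (j:ℤ) ∈ S then c' j else c j) *
      N (fun j => if (j:ℤ) ∈ S then c' j else c j) c' := by
  refine (Matrix.mul_apply).trans
    (Finset.sum_eq_single_of_mem _ (Finset.mem_univ _) fun e _ hne => ?_)
  obtain ⟨j, hj⟩ := Function.ne_iff.mp hne
  by_cases hjS : (j:ℤ) ∈ S
  · rw [if_pos hjS] at hj
    rw [hN.1 e c' ⟨j, hST.notMem_of_mem_left hjS, hj⟩, mul_zero]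
  · rw [if_neg hjS] at hj
    rw [hM.1 c e ⟨j, hjS, Ne.symm hj⟩, zero_mul]

lemma commute_of_disjoint (hM : MatSupportedOn L M S) (hN : MatSupportedOn L N T)
    (hST : Disjoint S T) : Commute M N := by
  ext c c'
  rw [mul_apply_of_disjoint hM hN hST, mul_apply_of_disjoint hN hM hST.symm]
  set d₀ : Cfg L := fun j => if (j:ℤ) ∈ S then c' j else c j
  set d₁ : Cfg L := fun j => if (j:ℤ) ∈ T then c' j else c j
  by_cases hcc : ∀ j : SiteIdx L, (j:ℤ) ∉ S → (j:ℤ) ∉ T → c j = c' j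
  · have hM_eq : M c d₀ = M d₁ c' := hM.2 _ _ _ _
      (fun j hj => by simp [d₀, d₁, hj, hST.notMem_of_mem_left hj])
      (fun j hj => by by_cases hjT : (j:ℤ) ∈ T <;> simp [d₀, d₁, hj, hjT, hcc])
    have hN_eq : N d₀ c' = N c d₁ := hN.2 _ _ _ _
      (fun j hj => by simp [d₀, d₁, hj, hST.notMem_of_mem_right hj])
      (fun j hj => by by_cases hjS : (j:ℤ) ∈ S <;> simp [d₀, d₁, hj, hjS, hcc])
    rw [hM_eq, hN_eq, mul_comm]
  · push Not at hcc
    obtain ⟨j, hjS, hjT, hne⟩ := hcc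
    rw [hN.1 d₀ c' ⟨j, hjT, by simpa [d₀, hjS]⟩, hM.1 d₁ c' ⟨j, hjS, by simpa [d₁, hjT]⟩,
      mul_zero, mul_zero]

end MatSupportedOn

def supportedMatrices (L : ℕ) (S : Set ℤ) : Subalgebra ℂ (Matrix (Cfg L) (Cfg L) ℂ) where
  carrier := {M | MatSupportedOn L M S}
  mul_mem' := MatSupportedOn.mul
  add_mem' := MatSupportedOn.add
  algebraMap_mem' := MatSupportedOn.algebraMap

def localAlgebra (L : ℕ) (S : Set ℤ) : Subalgebra ℂ (Op L) :=
  (supportedMatrices L S).comap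
    (Matrix.toEuclideanCLM (𝕜 := ℂ) (n := Cfg L)).symm.toAlgEquiv.toAlgHom

section LocalAlgebra

variable {L : ℕ} {S T : Set ℤ}

lemma IsLocalObs.mem_localAlgebra {X : Op L} {s r : ℤ} (hX : IsLocalObs L X s r) :
    X ∈ localAlgebra L (Set.Icc s r) :=
  hX.2.2.2

lemma localAlgebra_mono (hST : S ⊆ T) : localAlgebra L S ≤ localAlgebra L T :=
  fun _ hA => MatSupportedOn.mono hA hST

lemma commute_of_mem_localAlgebra {A B : Op L} (hA : A ∈ localAlgebra L S)
    (hB : B ∈ localAlgebra L T) (hST : Disjoint S T) : Commute A B :=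
  (Matrix.toEuclideanCLM (𝕜 := ℂ) (n := Cfg L)).symm.injective <| by
    rw [map_mul, map_mul]
    exact MatSupportedOn.commute_of_disjoint hA hB hST

end LocalAlgebra

section NearestNeighbourChain

variable {L : ℕ} {I : Finset ℤ} {Y : ℤ → Op L} {θ : ℝ}

lemma adCLM_sum_mem_localAlgebra_and_norm_le (hθ : 0 ≤ θ)
    (hY : ∀ i ∈ I, Y i ∈ localAlgebra L (Set.Icc i (i + 1)) ∧ ‖Y i‖ ≤ θ)
    {Z : Op L} {a b : ℤ} (hab : a ≤ b) (hZ : Z ∈ localAlgebra L (Set.Icc a b)) :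
    adCLM ℂ (∑ i ∈ I, Y i) Z ∈ localAlgebra L (Set.Icc (a - 1) (b + 1)) ∧
      ‖adCLM ℂ (∑ i ∈ I, Y i) Z‖ ≤ 2 * θ * (b - a + 2) * ‖Z‖ := by
  set J := I ∩ Finset.Icc (a - 1) b
  have hsum : adCLM ℂ (∑ i ∈ I, Y i) Z = ∑ i ∈ J, adCLM ℂ (Y i) Z := by
    rw [map_sum, _root_.sum_apply]
    refine (Finset.sum_subset Finset.inter_subset_left fun i hiI hiJ => ?_).symm
    have hi : ¬(a - 1 ≤ i ∧ i ≤ b) := fun h => hiJ (Finset.mem_inter.2 ⟨hiI, Finset.mem_Icc.2 h⟩)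
    have hdisj : Disjoint (Set.Icc i (i + 1)) (Set.Icc a b) := by
      refine Set.disjoint_left.2 fun x hx hx' => ?_
      simp only [Set.mem_Icc] at hx hx'
      omega
    rw [adCLM_apply, (commute_of_mem_localAlgebra (hY i hiI).1 hZ hdisj).eq, sub_self]
  have hJ (i : ℤ) (hi : i ∈ J) : a - 1 ≤ i ∧ i ≤ b ∧ i ∈ I := by
    simp only [J, Finset.mem_inter, Finset.mem_Icc] at hi
    exact ⟨hi.2.1, hi.2.2, hi.1⟩
  have hcard : (J.card : ℝ) ≤ b - a + 2 := by
    have h : J.card ≤ (Finset.Icc (a - 1) b).card := Finset.card_le_card Finset.inter_subset_right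
    have : (J.card : ℤ) ≤ b - a + 2 := by
      rw [Int.card_Icc] at h
      omega
    exact_mod_cast this
  rw [hsum]
  constructor
  · refine Subalgebra.sum_mem _ fun i hi => ?_
    obtain ⟨hi₁, hi₂, hiI⟩ := hJ i hi
    have hYi : Y i ∈ localAlgebra L (Set.Icc (a - 1) (b + 1)) :=
      localAlgebra_mono (Set.Icc_subset_Icc (by omega) (by omega)) (hY i hiI).1
    have hZ' : Z ∈ localAlgebra L (Set.Icc (a - 1) (b + 1)) :=
      localAlgebra_mono (Set.Icc_subset_Icc (by omega) (by omega)) hZ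
    rw [adCLM_apply]
    exact Subalgebra.sub_mem _ (Subalgebra.mul_mem _ hYi hZ') (Subalgebra.mul_mem _ hZ' hYi)
  · calc ‖∑ i ∈ J, adCLM ℂ (Y i) Z‖
        ≤ ∑ i ∈ J, 2 * θ * ‖Z‖ := by
          refine norm_sum_le_of_le J fun i hi => (norm_adCLM_apply_le _ _).trans ?_
          gcongr
          exact (hY i (hJ i hi).2.2).2
      _ ≤ (b - a + 2) * (2 * θ * ‖Z‖) := by
          rw [Finset.sum_const, nsmul_eq_mul]
          gcongr
      _ = 2 * θ * (b - a + 2) * ‖Z‖ := by ring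

lemma pow_adCLM_sum_mem_localAlgebra_and_norm_le (hθ : 0 ≤ θ)
    (hY : ∀ i ∈ I, Y i ∈ localAlgebra L (Set.Icc i (i + 1)) ∧ ‖Y i‖ ≤ θ)
    {X : Op L} {s r : ℤ} (hsr : s ≤ r) (hX : X ∈ localAlgebra L (Set.Icc s r)) (n : ℕ) :
    (adCLM ℂ (∑ i ∈ I, Y i) ^ n) X ∈ localAlgebra L (Set.Icc (s - n) (r + n)) ∧
      ‖(adCLM ℂ (∑ i ∈ I, Y i) ^ n) X‖ ≤
        (∏ k ∈ Finset.range n, 2 * θ * (r - s + 2 * k + 2)) * ‖X‖ := by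
  induction n with
  | zero => simpa using hX
  | succ n ih =>
    obtain ⟨hmem, hnorm⟩ := adCLM_sum_mem_localAlgebra_and_norm_le hθ hY (by omega) ih.1
    rw [pow_succ', mul_apply_eq_comp]
    refine ⟨by convert hmem using 3 <;> push_cast <;> ring, hnorm.trans ?_⟩
    rw [Finset.prod_range_succ]
    calc 2 * θ * (((r + n : ℤ) : ℝ) - ((s - n : ℤ) : ℝ) + 2) * ‖(adCLM ℂ (∑ i ∈ I, Y i) ^ n) X‖
        ≤ 2 * θ * (((r + n : ℤ) : ℝ) - ((s - n : ℤ) : ℝ) + 2) *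
            ((∏ k ∈ Finset.range n, 2 * θ * (r - s + 2 * k + 2)) * ‖X‖) := by
          have : (s : ℝ) ≤ r := by exact_mod_cast hsr
          gcongr
          · push_cast
            exact mul_nonneg (by positivity) (by linarith [(n.cast_nonneg : (0:ℝ) ≤ n)])
          · exact ih.2
      _ = _ := by push_cast; ring

lemma norm_pow_adCLM_smul_sum_le (hθ : 0 ≤ θ)
    (hY : ∀ i ∈ I, Y i ∈ localAlgebra L (Set.Icc i (i + 1)) ∧ ‖Y i‖ ≤ θ)
    {X : Op L} {s r : ℤ} (hsr : s ≤ r) (hX : X ∈ localAlgebra L (Set.Icc s r))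
    {c : ℂ} (hc : ‖c‖ * (4 * θ * (r - s + 2)) ≤ 1) (n : ℕ) :
    ‖(adCLM ℂ (c • ∑ i ∈ I, Y i) ^ n) X‖ ≤ ‖X‖ * n ! / 2 ^ n := by
  have hκ : (0 : ℝ) ≤ r - s := sub_nonneg.2 (by exact_mod_cast hsr)
  have hfactor (k : ℕ) : ‖c‖ * (2 * θ * (r - s + 2 * k + 2)) ≤ (k + 1) / 2 :=
    calc ‖c‖ * (2 * θ * (r - s + 2 * k + 2))
        ≤ ‖c‖ * (2 * θ * ((k + 1) * (r - s + 2))) := by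
          gcongr
          nlinarith [mul_nonneg (Nat.cast_nonneg k : (0:ℝ) ≤ k) hκ]
      _ = (k + 1) / 2 * (‖c‖ * (4 * θ * (r - s + 2))) := by ring
      _ ≤ (k + 1) / 2 := mul_le_of_le_one_right (by positivity) hc
  rw [map_smul, smul_pow, _root_.smul_apply, norm_smul, norm_pow]
  calc ‖c‖ ^ n * ‖(adCLM ℂ (∑ i ∈ I, Y i) ^ n) X‖
      ≤ ‖c‖ ^ n * ((∏ k ∈ Finset.range n, 2 * θ * (r - s + 2 * k + 2)) * ‖X‖) := by
        gcongr
        exact (pow_adCLM_sum_mem_localAlgebra_and_norm_le hθ hY hsr hX n).2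
    _ = (∏ k ∈ Finset.range n, ‖c‖ * (2 * θ * (r - s + 2 * k + 2))) * ‖X‖ := by
        simp only [Finset.prod_mul_distrib, Finset.prod_const, Finset.card_range]
        ring
    _ ≤ (∏ k ∈ Finset.range n, ((k : ℝ) + 1) / 2) * ‖X‖ := by
        gcongr with k
        exact hfactor k
    _ = ‖X‖ * n ! / 2 ^ n := by
        rw [Finset.prod_div_distrib, Finset.prod_const, Finset.card_range]
        rw [show ∏ k ∈ Finset.range n, ((k : ℝ) + 1) = (n ! : ℝ) by
          exact_mod_cast Finset.prod_range_add_one_eq_factorial n]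
        ring

lemma norm_exp_neg_smul_sum_mul_mul_exp_smul_le (hθ : 0 ≤ θ)
    (hY : ∀ i ∈ I, Y i ∈ localAlgebra L (Set.Icc i (i + 1)) ∧ ‖Y i‖ ≤ θ)
    {X : Op L} {s r : ℤ} (hsr : s ≤ r) (hX : X ∈ localAlgebra L (Set.Icc s r))
    {c : ℂ} (hc : ‖c‖ * (4 * θ * (r - s + 2)) ≤ 1) :
    ‖exp ((-c) • ∑ i ∈ I, Y i) * X * exp (c • ∑ i ∈ I, Y i)‖ ≤ 2 * ‖X‖ :=
  norm_exp_neg_smul_mul_mul_exp_smul_le c _ X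
    (norm_pow_adCLM_smul_sum_le hθ hY hsr hX (by rwa [norm_neg]))

end NearestNeighbourChain

section SpectralCutoff

variable {L : ℕ} {H : Op L}

lemma continuousOn_spectrum (A : Op L) (f : ℂ → ℂ) : ContinuousOn f (spectrum ℂ A) := by
  have hfin : (spectrum ℂ A).Finite := by
    rw [← AlgEquiv.spectrum_eq (Matrix.toEuclideanCLM (𝕜 := ℂ) (n := Cfg L)).symm A]
    exact Matrix.finite_spectrum _
  have := hfin.to_subtype
  exact continuousOn_iff_continuous_domRestrict.mpr continuous_of_discreteTopology

lemma exp_smul_eq_cfc (hH : IsSelfAdjoint H) (t : ℝ) :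
    exp ((t:ℂ) • H) = cfc (fun z => Complex.exp (t * z)) H := by
  have htH : IsSelfAdjoint ((t:ℂ) • H) := by
    rw [isSelfAdjoint_iff, star_smul, Complex.star_def, Complex.conj_ofReal, hH.star_eq]
  rw [← CFC.exp_eq_normedSpace_exp (𝕜 := ℂ) htH.isStarNormal, ← Complex.exp_eq_exp_ℂ,
    ← cfc_comp_smul (t:ℂ) Complex.exp H Complex.continuous_exp.continuousOn hH.isStarNormal]
  rfl

lemma one_sub_specProj (hH : IsSelfAdjoint H) (B : Set ℝ) :
    1 - specProj L B H = specProj L Bᶜ H := by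
  rw [specProj, specProj, opFun, opFun, ← cfc_one ℂ H hH.isStarNormal,
    ← cfc_sub _ _ H (continuousOn_spectrum H _) (continuousOn_spectrum H _)]
  congr 1
  funext z
  by_cases hz : z.re ∈ B <;> simp [hz]

lemma norm_specProj_mul_exp_le (hH : IsSelfAdjoint H) (B : Set ℝ) {t M : ℝ}
    (hM : ∀ x ∈ B, t * x ≤ M) : ‖specProj L B H * exp ((t:ℂ) • H)‖ ≤ Real.exp M := by
  rw [exp_smul_eq_cfc hH, specProj, opFun,
    ← cfc_mul _ _ H (continuousOn_spectrum H _) (continuousOn_spectrum H _)]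
  refine norm_cfc_le (Real.exp_nonneg M) fun z _ => ?_
  by_cases hz : z.re ∈ B
  · simpa [hz, Complex.norm_exp] using hM z.re hz
  · simp [hz, Real.exp_nonneg]

lemma norm_exp_mul_specProj_le (hH : IsSelfAdjoint H) (B : Set ℝ) {t M : ℝ}
    (hM : ∀ x ∈ B, t * x ≤ M) : ‖exp ((t:ℂ) • H) * specProj L B H‖ ≤ Real.exp M := by
  rw [exp_smul_eq_cfc hH, specProj, opFun, ← (cfc_commute_cfc _ _ H).eq, ← exp_smul_eq_cfc hH]
  exact norm_specProj_mul_exp_le hH B hM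

lemma norm_specProj_mul_mul_one_sub_specProj_le (hH : IsSelfAdjoint H) (X : Op L) {τ C : ℝ}
    (hτ : 0 ≤ τ) (hX : ‖exp ((-(τ:ℂ)) • H) * X * exp ((τ:ℂ) • H)‖ ≤ C) (E E' : ℝ) :
    ‖specProj L (Set.Iic E) H * X * (1 - specProj L (Set.Iic E') H)‖ ≤
      C * Real.exp (-τ * (E' - E)) := by
  have hP := norm_specProj_mul_exp_le hH (Set.Iic E) (M := τ * E) fun x hx =>
    mul_le_mul_of_nonneg_left hx hτ
  have hQ := norm_exp_mul_specProj_le hH (Set.Iic E')ᶜ (t := -τ) (M := -τ * E') fun x hx => by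
    have hx' : E' < x := not_le.1 hx
    nlinarith
  rw [Complex.ofReal_neg] at hQ
  have hcancel (Z : Op L) : exp ((τ:ℂ) • H) * (exp ((-(τ:ℂ)) • H) * Z) = Z :=
    exp_smul_mul_exp_neg_smul_mul _ _ _
  have hC : 0 ≤ C := (norm_nonneg _).trans hX
  calc _ = ‖(specProj L (Set.Iic E) H * exp ((τ:ℂ) • H)) *
          (exp ((-(τ:ℂ)) • H) * X * exp ((τ:ℂ) • H)) *
          (exp ((-(τ:ℂ)) • H) * specProj L (Set.Iic E')ᶜ H)‖ := by
        rw [one_sub_specProj hH]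
        simp only [mul_assoc, hcancel]
    _ ≤ Real.exp (τ * E) * C * Real.exp (-τ * E') := norm_mul₃_le.trans (by gcongr)
    _ = C * Real.exp (-τ * (E' - E)) := by
        rw [mul_comm (Real.exp _), mul_assoc, ← Real.exp_add]
        ring_nf

end SpectralCutoff

end

/-- Lemma A.1: a priori bound on transition probabilities
between Fermi projections for spin chains. -/
theorem fermi_transition_bound
    (θ : ℝ) :
    ∃ mF CF : ℝ, 0 < mF ∧ 0 < CF ∧ ∀ (L : ℕ) (Yl : ℤ → Op L),
      (∀ i ∈ Finset.Icc (-(L:ℤ)) ((L:ℤ)-1),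
        IsSelfAdjoint (Yl i) ∧ IsLocalObs L (Yl i) i (i+1) ∧ ‖Yl i‖ ≤ θ) →
      ∀ (X : Op L) (sX rX : ℤ), IsLocalObs L X sX rX →
      ∀ E E' : ℝ, E < E' →
        ‖specProj L (Set.Iic E) (∑ i ∈ Finset.Icc (-(L:ℤ)) ((L:ℤ)-1), Yl i) * X *
            (1 - specProj L (Set.Iic E') (∑ i ∈ Finset.Icc (-(L:ℤ)) ((L:ℤ)-1), Yl i))‖ ≤
          CF * ‖X‖ * Real.exp (-(mF / ((rX - sX + 1 : ℤ) : ℝ)) * (E' - E)) := by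
  set θ' := max θ 1
  have hθ' : 0 < θ' := lt_max_of_lt_right one_pos
  refine ⟨1 / (8 * θ'), 2, by positivity, two_pos, fun L Y hY X sX rX hX E E' hEE' => ?_⟩
  have hsr : sX ≤ rX := hX.2.1
  set w : ℝ := ((rX - sX + 1 : ℤ) : ℝ)
  have hw : 1 ≤ w := by
    change (1:ℝ) ≤ ((rX - sX + 1 : ℤ) : ℝ)
    exact_mod_cast (by omega : (1:ℤ) ≤ rX - sX + 1)
  set τ : ℝ := 1 / (4 * θ' * (w + 1))
  have hτ : 0 < τ := by positivity
  have hc : ‖(τ:ℂ)‖ * (4 * θ' * (rX - sX + 2)) ≤ 1 := by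
    have hwidth : (rX : ℝ) - sX + 2 = w + 1 := by push_cast [w]; ring
    rw [Complex.norm_real, Real.norm_of_nonneg hτ.le, hwidth, one_div_mul_cancel (by positivity)]
  have hconj := norm_exp_neg_smul_sum_mul_mul_exp_smul_le hθ'.le
    (fun i hi => ⟨(hY i hi).2.1.mem_localAlgebra, (hY i hi).2.2.trans (le_max_left θ 1)⟩)
    hsr hX.mem_localAlgebra hc
  have hm : 1 / (8 * θ') / w ≤ τ := by
    rw [div_div]
    exact one_div_le_one_div_of_le (by positivity) (by nlinarith)
  calc _ ≤ 2 * ‖X‖ * Real.exp (-τ * (E' - E)) :=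
        norm_specProj_mul_mul_one_sub_specProj_le
          (isSelfAdjoint_sum (R := Op L) _ fun i hi => (hY i hi).1) X hτ.le hconj E E'
    _ ≤ _ := by gcongr
end
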